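/- Consider the instance with three agents N = {1,2,3}, two indivisible goods M = {a,b}, and one divisible good C = [0,1) with linear valuations, where u_1(a) = 0.37, u_1(b) = 0, u_2(a) = 0, u_2(b) = 0.7, u_3(a) = 0, u_3(b) = 1, and for every piece S ⊆ [0,1): u_1(S) = 0.63·μ(S), u_2(S) = 0.3·μ(S), u_3(S) = 0 (μ denoting Lebesgue measure). In this instance, no leximin allocation is envy-free up to one good for mixed goods (EF1M). -/

import Mathlib

open MeasureTheory

/-- An allocation of `m` indivisible goods and of the cake `[0,1)` among `n` agents:
the indivisible goods are partitioned into the bundles `ind i`, and the cake `[0,1)`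
is partitioned into the measurable (Borel) pieces `piece i`. -/
structure Alloc (n m : ℕ) where
  ind : Fin n → Finset (Fin m)
  piece : Fin n → Set ℝ
  ind_partition : ∀ g : Fin m, ∃! i : Fin n, g ∈ ind i
  piece_measurable : ∀ i, MeasurableSet (piece i)
  piece_disjoint : ∀ i j : Fin n, i ≠ j → piece i ∩ piece j = ∅
  piece_cover : (⋃ i, piece i) = Set.Ico (0 : ℝ) 1

/-- Values for the two indivisible goods `a, b`: `u_1(a) = 0.37`, `u_1(b) = 0`,
`u_2(a) = 0`, `u_2(b) = 0.7`, `u_3(a) = 0`, `u_3(b) = 1`. -/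
noncomputable def vM (i : Fin 3) (g : Fin 2) : ℝ :=
  if i = 0 then (if g = 0 then 0.37 else 0)
  else if i = 1 then (if g = 0 then 0 else 0.7)
  else (if g = 0 then 0 else 1)

/-- Linear values for pieces `S ⊆ [0,1)` of the divisible good:
`u_1(S) = 0.63·μ(S)`, `u_2(S) = 0.3·μ(S)`, `u_3(S) = 0`, `μ` Lebesgue measure. -/
noncomputable def dval (i : Fin 3) (S : Set ℝ) : ℝ :=
  (if i = 0 then 0.63 else if i = 1 then 0.3 else 0) * (volume S).toReal

/-- Value of agent `i` for agent `j`'s bundle `A_j = M_j ∪ C_j`. -/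
noncomputable def valOn (A : Alloc 3 2) (i j : Fin 3) : ℝ :=
  (∑ g ∈ A.ind j, vM i g) + dval i (A.piece j)

/-- Utility of agent `i` in allocation `A`. -/
noncomputable def util (A : Alloc 3 2) (i : Fin 3) : ℝ := valOn A i i

/-- Value of agent `i` for agent `j`'s bundle with indivisible good `g` removed. -/
noncomputable def valOnErase (A : Alloc 3 2) (i j : Fin 3) (g : Fin 2) : ℝ :=
  (∑ g' ∈ A.ind j \ {g}, vM i g') + dval i (A.piece j)

/-- Lexicographic comparison of vectors: `x ≤ y` lexicographically. -/
def lexLE (x y : Fin 3 → ℝ) : Prop :=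
  x = y ∨ ∃ k : Fin 3, x k < y k ∧ ∀ k' : Fin 3, k' < k → x k' = y k'

/-- The vector `x` sorted in non-decreasing order. -/
noncomputable def sortedVec (x : Fin 3 → ℝ) : Fin 3 → ℝ := x ∘ Tuple.sort x

/-- A leximin allocation lexicographically maximizes the agents' utility vector
sorted in non-decreasing order. -/
def Leximin (A : Alloc 3 2) : Prop :=
  ∀ A' : Alloc 3 2, lexLE (sortedVec (util A')) (sortedVec (util A))

/-- Envy-freeness up to one good for mixed goods (EF1M). -/
def EF1M (A : Alloc 3 2) : Prop :=
  ∀ i j : Fin 3,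
    (A.ind j = ∅ → valOn A i j ≤ util A i) ∧
    (A.ind j ≠ ∅ → ∃ g ∈ A.ind j, valOnErase A i j g ≤ util A i)

/-!
The allocation giving `a` to agent 1, the whole cake to agent 2 and `b` to agent 3 gives every
agent utility at least `0.3`, so a leximin allocation does too. Since agent 3 only values `b`,
it must hold `b`; agent 2 then reaches `0.3` only with a full-measure piece, which leaves agent 1
a null piece and forces `a` into agent 1's bundle. So agent 2 holds no indivisible good, yet agent 1
values agent 2's bundle at `0.63 > 0.37`. (Agents and goods are `0`-indexed in the code.)
-/

namespace Alloc

variable {n m : ℕ} (A : Alloc n m)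

theorem notMem_ind_of_mem {g : Fin m} {i j : Fin n} (hi : g ∈ A.ind i) (hij : i ≠ j) :
    g ∉ A.ind j :=
  fun hj => hij ((A.ind_partition g).unique hi hj)

theorem piece_subset_Ico (i : Fin n) : A.piece i ⊆ Set.Ico 0 1 :=
  A.piece_cover ▸ Set.subset_iUnion A.piece i

theorem volume_piece_ne_top (i : Fin n) : volume (A.piece i) ≠ ⊤ :=
  ((measure_mono (A.piece_subset_Ico i)).trans_lt measure_Ico_lt_top).ne

theorem volume_real_piece_le_one (i : Fin n) : volume.real (A.piece i) ≤ 1 := by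
  simpa using measureReal_mono (μ := volume) (A.piece_subset_Ico i) measure_Ico_lt_top.ne

theorem volume_real_piece_add_le_one {i j : Fin n} (hij : i ≠ j) :
    volume.real (A.piece i) + volume.real (A.piece j) ≤ 1 := by
  have hdisj : Disjoint (A.piece i) (A.piece j) :=
    Set.disjoint_iff_inter_eq_empty.2 (A.piece_disjoint i j hij)
  calc volume.real (A.piece i) + volume.real (A.piece j)
      = volume.real (A.piece i ∪ A.piece j) :=
        (measureReal_union hdisj (A.piece_measurable j) (A.volume_piece_ne_top i)
          (A.volume_piece_ne_top j)).symm
    _ ≤ volume.real (Set.Ico (0 : ℝ) 1) :=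
        measureReal_mono (Set.union_subset (A.piece_subset_Ico i) (A.piece_subset_Ico j))
          measure_Ico_lt_top.ne
    _ = 1 := by simp

end Alloc

theorem Finset.sum_fin_two_eq {M : Type*} [AddCommMonoid M] (s : Finset (Fin 2)) (f : Fin 2 → M) :
    ∑ g ∈ s, f g = (if 0 ∈ s then f 0 else 0) + (if 1 ∈ s then f 1 else 0) := by
  rw [← Fin.sum_univ_two (fun g => if g ∈ s then f g else 0), Finset.sum_ite_mem,
    Finset.univ_inter]

theorem valOn_zero (A : Alloc 3 2) (j : Fin 3) :
    valOn A 0 j = (if 0 ∈ A.ind j then 0.37 else 0) + 0.63 * volume.real (A.piece j) := by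
  rw [valOn, Finset.sum_fin_two_eq]
  simp [dval, vM, measureReal_def]

theorem valOn_one (A : Alloc 3 2) (j : Fin 3) :
    valOn A 1 j = (if 1 ∈ A.ind j then 0.7 else 0) + 0.3 * volume.real (A.piece j) := by
  rw [valOn, Finset.sum_fin_two_eq]
  simp [dval, vM, measureReal_def]

theorem valOn_two (A : Alloc 3 2) (j : Fin 3) :
    valOn A 2 j = if 1 ∈ A.ind j then 1 else 0 := by
  rw [valOn, Finset.sum_fin_two_eq]
  simp [dval, vM]

noncomputable def maxminAlloc : Alloc 3 2 where
  ind := ![{0}, ∅, {1}]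
  piece := ![∅, Set.Ico 0 1, ∅]
  ind_partition g := by
    fin_cases g
    · exact ⟨0, by simp, fun j hj => by fin_cases j <;> simp_all⟩
    · exact ⟨2, by simp, fun j hj => by fin_cases j <;> simp_all⟩
  piece_measurable i := by fin_cases i <;> simp
  piece_disjoint i j hij := by fin_cases i <;> fin_cases j <;> simp_all
  piece_cover := by
    ext x
    simp only [Set.mem_iUnion, Fin.exists_fin_succ]
    simp

theorem le_util_maxminAlloc : ∀ i, 0.3 ≤ util maxminAlloc i
  | 0 | 1 | 2 => by simp [util, valOn_zero, valOn_one, valOn_two, maxminAlloc] <;> norm_num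

theorem lexLE.apply_zero_le {x y : Fin 3 → ℝ} (h : lexLE x y) : x 0 ≤ y 0 := by
  rcases h with rfl | ⟨k, hlt, heq⟩
  · exact le_rfl
  · rcases eq_or_ne k 0 with rfl | hk
    · exact hlt.le
    · exact (heq 0 (Fin.pos_of_ne_zero hk)).le

theorem sortedVec_zero_le (x : Fin 3 → ℝ) (i : Fin 3) : sortedVec x 0 ≤ x i := by
  simpa [sortedVec] using Tuple.monotone_sort x (Fin.zero_le ((Tuple.sort x).symm i))

theorem Leximin.le_util {A A' : Alloc 3 2} (hA : Leximin A) {c : ℝ} (hc : ∀ i, c ≤ util A' i)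
    (i : Fin 3) : c ≤ util A i :=
  calc c ≤ sortedVec (util A') 0 := hc _
    _ ≤ sortedVec (util A) 0 := (hA A').apply_zero_le
    _ ≤ util A i := sortedVec_zero_le _ i

theorem not_EF1M_of_le_util {A : Alloc 3 2} (h : ∀ i, 0.3 ≤ util A i) : ¬ EF1M A := by
  have hb : 1 ∈ A.ind 2 := by
    by_contra hb
    have := h 2
    rw [util, valOn_two, if_neg hb] at this
    norm_num at this
  have hvol₁ : volume.real (A.piece 1) = 1 := by
    have := h 1
    rw [util, valOn_one, if_neg (A.notMem_ind_of_mem hb (by decide))] at this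
    linarith [A.volume_real_piece_le_one 1]
  have hvol₀ : volume.real (A.piece 0) = 0 := by
    linarith [A.volume_real_piece_add_le_one (i := 0) (j := 1) (by decide),
      measureReal_nonneg (μ := volume) (s := A.piece 0)]
  have ha : 0 ∈ A.ind 0 := by
    by_contra ha
    have := h 0
    rw [util, valOn_zero, if_neg ha, hvol₀] at this
    norm_num at this
  have hind₁ : A.ind 1 = ∅ := Finset.eq_empty_of_forall_notMem fun g => by
    fin_cases g
    exacts [A.notMem_ind_of_mem ha (by decide), A.notMem_ind_of_mem hb (by decide)]
  intro hEF
  have henvy := (hEF 0 1).1 hind₁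
  rw [util, valOn_zero, valOn_zero, hind₁, hvol₀, hvol₁, if_pos ha] at henvy
  norm_num at henvy

/-- in this instance (three agents, two indivisible goods `a, b` with
`u_1(a) = 0.37`, `u_2(b) = 0.7`, `u_3(b) = 1`, and the divisible good `[0,1)` with
linear values `0.63·μ(S)`, `0.3·μ(S)`, `0`), no leximin allocation is EF1M. -/
theorem no_leximin_allocation_is_EF1M :
    ∀ A : Alloc 3 2, Leximin A → ¬ EF1M A :=
  fun _ hA => not_EF1M_of_le_util (hA.le_util le_util_maxminAlloc)
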